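/- arXiv:1604.04945 — 8 statements merged into one kernel-verified Lean document; each statement's English description precedes it below -/
import Mathlib

section
/- If K is a finite set with a ternary operation satisfying axioms T1–T4, then axiom T5 holds automatically; i.e., for x ≠ x' and any y, y' there is a unique pair (a,b) with y = ⟨ax+b⟩ and y' = ⟨ax'+b⟩. -/
/-! Two lines through both points `(x, y)` and `(x', y')` have equal slopes by T4 and then equal
intercepts by T3, so `(a, b) ↦ (⟨ax+b⟩, ⟨ax'+b⟩)` is injective on the finite set `K × K`,
hence bijective. -/

namespace TernaryRing

variable {K : Type*} (t : K → K → K → K)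

def evalPair (x x' : K) (p : K × K) : K × K :=
  (t p.1 x p.2, t p.1 x' p.2)

variable {t}

lemma injective_of_forall_existsUnique (T3 : ∀ a x y, ∃! b, t a x b = y) (a x : K) :
    Function.Injective (t a x) :=
  fun _ b' h => (T3 a x (t a x b')).unique h rfl

lemma evalPair_injective (T3 : ∀ a x y, ∃! b, t a x b = y)
    (T4 : ∀ a a' b b', a ≠ a' → ∃! x, t a x b = t a' x b') {x x' : K} (hx : x ≠ x') :
    Function.Injective (evalPair t x x') := by
  rintro ⟨a, b⟩ ⟨a', b'⟩ h
  obtain ⟨hy, hy'⟩ := Prod.mk.inj h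
  obtain rfl : a = a' := by
    by_contra hne
    exact hx ((T4 a a' b b' hne).unique hy hy')
  exact Prod.ext rfl (injective_of_forall_existsUnique T3 a x hy)

end TernaryRing

theorem finite_ternary_T5_general {K : Type*} [Finite K]
    (t : K → K → K → K)
    (T3 : ∀ a x y, ∃! b, t a x b = y)
    (T4 : ∀ a a' b b', a ≠ a' → ∃! x, t a x b = t a' x b') :
    ∀ x x' y y' : K, x ≠ x' →
      ∃! p : K × K, t p.1 x p.2 = y ∧ t p.1 x' p.2 = y' := by
  intro x x' y y' hx
  have hbij : Function.Bijective (TernaryRing.evalPair t x x') :=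
    Finite.injective_iff_bijective.mp (TernaryRing.evalPair_injective T3 T4 hx)
  simpa only [TernaryRing.evalPair, Prod.ext_iff] using hbij.existsUnique (y, y')

/-- For a finite set with a ternary operation, axioms T1–T4 imply T5. -/
theorem finite_ternary_T5 {K : Type*} [Finite K] (zero one : K) (h01 : one ≠ zero)
    (t : K → K → K → K)
    (T1 : ∀ x, t one x zero = x ∧ t x one zero = x)
    (T2 : ∀ a b, t a zero b = b ∧ t zero a b = b)
    (T3 : ∀ a x y, ∃! b, t a x b = y)
    (T4 : ∀ a a' b b', a ≠ a' → ∃! x, t a x b = t a' x b') :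
    ∀ x x' y y' : K, x ≠ x' →
      ∃! p : K × K, t p.1 x p.2 = y ∧ t p.1 x' p.2 = y' :=
  finite_ternary_T5_general t T3 T4
end

section
/- If K is a ternary ring, then K² with vertical lines {(x₀,y) : y ∈ K} and lines {(x,y) : y = ⟨ax+b⟩} for a,b ∈ K is an affine plane. -/
/-- A ternary ring: 0 ≠ 1 and a ternary operation satisfying T1–T5. -/
def IsTernaryRing {K : Type*} (zero one : K) (t : K → K → K → K) : Prop :=
  one ≠ zero ∧
  (∀ x, t one x zero = x ∧ t x one zero = x) ∧
  (∀ a b, t a zero b = b ∧ t zero a b = b) ∧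
  (∀ a x y, ∃! b, t a x b = y) ∧
  (∀ a a' b b', a ≠ a' → ∃! x, t a x b = t a' x b') ∧
  (∀ x x' y y', x ≠ x' → ∃! p : K × K, t p.1 x p.2 = y ∧ t p.1 x' p.2 = y')

/-- The lines of the plane K² coordinatized by a ternary operation. -/
def ternaryLines {K : Type*} (t : K → K → K → K) : Set (Set (K × K)) :=
  {S | (∃ c, S = {p : K × K | p.1 = c}) ∨ (∃ a b, S = {p : K × K | p.2 = t a p.1 b})}

/-!
Two points with equal abscissae lie only on a vertical line, and otherwise T5 gives the unique
line `y = ⟨ax+b⟩` through them. Vertical lines meet every non-vertical line, and by T4 two lines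
of different slopes meet, so a parallel to `y = ⟨ax+b⟩` has slope `a`; T3 then fixes its
intercept through the given point and makes lines of equal slope and distinct intercepts
disjoint. By T2 no line passes through `(0,0)`, `(1,0)` and `(0,1)`.
-/

namespace TernaryPlane

variable {K : Type*} {t : K → K → K → K}

def vertLine (c : K) : Set (K × K) := {p | p.1 = c}

def slopeLine (t : K → K → K → K) (a b : K) : Set (K × K) := {p | p.2 = t a p.1 b}

@[simp]
lemma mem_slopeLine {a b : K} {p : K × K} : p ∈ slopeLine t a b ↔ p.2 = t a p.1 b := Iff.rfl

lemma vertLine_mem_ternaryLines (c : K) : vertLine c ∈ ternaryLines t := Or.inl ⟨c, rfl⟩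

lemma slopeLine_mem_ternaryLines (a b : K) : slopeLine t a b ∈ ternaryLines t :=
  Or.inr ⟨a, b, rfl⟩

lemma eq_of_mem_slopeLine_of_fst_eq {a b : K} {p q : K × K} (hp : p ∈ slopeLine t a b)
    (hq : q ∈ slopeLine t a b) (h : p.1 = q.1) : p = q :=
  Prod.ext h (by rw [mem_slopeLine.mp hp, mem_slopeLine.mp hq, h])

lemma vertLine_inter_slopeLine_ne_empty (c a b : K) : vertLine c ∩ slopeLine t a b ≠ ∅ :=
  Set.nonempty_iff_ne_empty.mp ⟨(c, t a c b), rfl, rfl⟩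

lemma vertLine_inter_vertLine_eq_empty {c c' : K} (h : c ≠ c') :
    vertLine c ∩ vertLine c' = ∅ :=
  Set.eq_empty_of_forall_notMem fun _ ⟨hc, hc'⟩ => h (hc.symm.trans hc')

lemma eq_vertLine_of_mem {l : Set (K × K)} (hl : l ∈ ternaryLines t) {p q : K × K}
    (hpq : p ≠ q) (hp : p ∈ l) (hq : q ∈ l) (h : p.1 = q.1) : l = vertLine p.1 := by
  obtain ⟨c, rfl⟩ | ⟨a, b, rfl⟩ := hl
  · rw [show p.1 = c from hp]
    rfl
  · exact absurd (eq_of_mem_slopeLine_of_fst_eq hp hq h) hpq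

section Axioms

variable (hT3 : ∀ a x y, ∃! b, t a x b = y)
variable (hT4 : ∀ a a' b b', a ≠ a' → ∃! x, t a x b = t a' x b')
variable (hT5 : ∀ x x' y y', x ≠ x' → ∃! p : K × K, t p.1 x p.2 = y ∧ t p.1 x' p.2 = y')

include hT3 in
lemma slopeLine_inter_slopeLine_eq_empty {a b b' : K} (h : b ≠ b') :
    slopeLine t a b ∩ slopeLine t a b' = ∅ :=
  Set.eq_empty_of_forall_notMem fun r ⟨hb, hb'⟩ =>
    h ((hT3 a r.1 r.2).unique hb.symm hb'.symm)

include hT4 in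
lemma slopeLine_inter_slopeLine_ne_empty {a a' : K} (h : a ≠ a') (b b' : K) :
    slopeLine t a b ∩ slopeLine t a' b' ≠ ∅ := by
  obtain ⟨x, hx, -⟩ := hT4 a a' b b' h
  exact Set.nonempty_iff_ne_empty.mp ⟨(x, t a x b), rfl, hx⟩

include hT5 in
lemma existsUnique_line_through {p q : K × K} (hpq : p ≠ q) :
    ∃! l, l ∈ ternaryLines t ∧ p ∈ l ∧ q ∈ l := by
  by_cases h : p.1 = q.1
  · exact ⟨vertLine p.1, ⟨vertLine_mem_ternaryLines _, rfl, h.symm⟩,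
      fun l ⟨hl, hp, hq⟩ => eq_vertLine_of_mem hl hpq hp hq h⟩
  obtain ⟨⟨a, b⟩, ⟨hpa, hqa⟩, huniq⟩ := hT5 p.1 q.1 p.2 q.2 h
  refine ⟨slopeLine t a b, ⟨slopeLine_mem_ternaryLines a b, hpa.symm, hqa.symm⟩, ?_⟩
  rintro l ⟨⟨c, rfl⟩ | ⟨a', b', rfl⟩, hp, hq⟩
  · exact absurd (hp.trans hq.symm) h
  · obtain ⟨rfl, rfl⟩ := Prod.ext_iff.mp (huniq (a', b') ⟨hp.symm, hq.symm⟩)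
    rfl

lemma existsUnique_parallel_vertLine {c : K} {p : K × K} (hp : p ∉ vertLine c) :
    ∃! m, m ∈ ternaryLines t ∧ p ∈ m ∧ vertLine c ∩ m = ∅ := by
  refine ⟨vertLine p.1, ⟨vertLine_mem_ternaryLines _, rfl,
    vertLine_inter_vertLine_eq_empty (Ne.symm hp)⟩, ?_⟩
  rintro m ⟨⟨c', rfl⟩ | ⟨a, b, rfl⟩, hpm, hdisj⟩
  · rw [show p.1 = c' from hpm]
    rfl
  · exact absurd hdisj (vertLine_inter_slopeLine_ne_empty c a b)

include hT3 hT4 in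
lemma existsUnique_parallel_slopeLine {a b : K} {p : K × K} (hp : p ∉ slopeLine t a b) :
    ∃! m, m ∈ ternaryLines t ∧ p ∈ m ∧ slopeLine t a b ∩ m = ∅ := by
  obtain ⟨b', hb', hb'_unique⟩ := hT3 a p.1 p.2
  have hbb' : b ≠ b' := by
    rintro rfl
    exact hp hb'.symm
  refine ⟨slopeLine t a b', ⟨slopeLine_mem_ternaryLines a b', hb'.symm,
    slopeLine_inter_slopeLine_eq_empty hT3 hbb'⟩, ?_⟩
  rintro m ⟨⟨c, rfl⟩ | ⟨a', b'', rfl⟩, hpm, hdisj⟩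
  · exact absurd (Set.inter_comm _ _ ▸ hdisj) (vertLine_inter_slopeLine_ne_empty c a b)
  · obtain rfl | ha := eq_or_ne a a'
    · rw [hb'_unique b'' hpm.symm]
      rfl
    · exact absurd hdisj (slopeLine_inter_slopeLine_ne_empty hT4 ha b b'')

end Axioms

lemma not_collinear_origin_unitPoints {zero one : K} (h10 : one ≠ zero)
    (ht0 : ∀ a b, t a zero b = b) :
    ∀ l ∈ ternaryLines t, ¬((zero, zero) ∈ l ∧ (one, zero) ∈ l ∧ (zero, one) ∈ l) := by
  rintro l (⟨c, rfl⟩ | ⟨a, b, rfl⟩) ⟨hO, hX, hY⟩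
  · exact h10 (hX.trans hO.symm)
  · have hO : zero = b := (mem_slopeLine.mp hO).trans (ht0 a b)
    have hY : one = b := (mem_slopeLine.mp hY).trans (ht0 a b)
    exact h10 (hY.trans hO.symm)

end TernaryPlane

open TernaryPlane in
/-- The plane K² over a ternary ring is an affine plane. -/
theorem ternaryRing_plane_is_affine {K : Type*} (zero one : K) (t : K → K → K → K)
    (hT : IsTernaryRing zero one t) :
    (∀ p q : K × K, p ≠ q → ∃! l, l ∈ ternaryLines t ∧ p ∈ l ∧ q ∈ l) ∧
    (∀ l ∈ ternaryLines t, ∀ p ∉ l,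
      ∃! m, m ∈ ternaryLines t ∧ p ∈ m ∧ l ∩ m = ∅) ∧
    (∃ p q r : K × K, ∀ l ∈ ternaryLines t, ¬(p ∈ l ∧ q ∈ l ∧ r ∈ l)) := by
  obtain ⟨h10, -, hT2, hT3, hT4, hT5⟩ := hT
  refine ⟨fun p q => existsUnique_line_through hT5, ?_,
    ⟨_, _, _, not_collinear_origin_unitPoints h10 fun a b => (hT2 a b).1⟩⟩
  rintro l (⟨c, rfl⟩ | ⟨a, b, rfl⟩) p hp
  · exact existsUnique_parallel_vertLine hp
  · exact existsUnique_parallel_slopeLine hT3 hT4 hp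
end

section
/- A finite weak left quasi-field is a left quasi-field; that is, if K is finite and satisfies VW1–VW4, then for all a ≠ a' and all b, the equation ax = a'x + b has a unique solution x. -/
/-!
Left distributivity makes `x ↦ a x - a' x` an additive endomorphism of `K`. Its kernel is trivial
when `a ≠ a'`, because right division by a nonzero `z` is unique (and `x z = 0` forces `x = 0`).
An injective self-map of a finite set is bijective, so `a x - a' x = b` has exactly one solution.
-/

/-- A weak left quasi-field: abelian additive group and axioms VW2–VW4. -/
def IsWeakLeftQuasifield {K : Type*} [AddCommGroup K] (mul : K → K → K) (one : K) : Prop :=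
  one ≠ 0 ∧
  (∀ a b : K, a ≠ 0 → b ≠ 0 →
    (∃! x, mul a x = b) ∧ (∃! x, mul x a = b) ∧
    (∀ x, mul a x = b → x ≠ 0) ∧ (∀ x, mul x a = b → x ≠ 0) ∧ mul a b ≠ 0) ∧
  (∀ x : K, mul one x = x ∧ mul x one = x ∧ mul 0 x = 0 ∧ mul x 0 = 0) ∧
  (∀ a x y : K, mul a (x + y) = mul a x + mul a y)

namespace IsWeakLeftQuasifield

variable {K : Type*} [AddCommGroup K] {mul : K → K → K} {one : K}

theorem mul_eq_zero_iff_right (hQ : IsWeakLeftQuasifield mul one) {x z : K} (hz : z ≠ 0) :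
    mul x z = 0 ↔ x = 0 := by
  refine ⟨fun h => ?_, fun hx => hx ▸ (hQ.2.2.1 z).2.2.1⟩
  by_contra hx
  exact (hQ.2.1 x z hx hz).2.2.2.2 h

theorem mul_right_cancel (hQ : IsWeakLeftQuasifield mul one) {a a' z : K} (hz : z ≠ 0)
    (h : mul a z = mul a' z) : a = a' := by
  by_cases hc : mul a z = 0
  · rw [(hQ.mul_eq_zero_iff_right hz).1 hc, (hQ.mul_eq_zero_iff_right hz).1 (h.symm.trans hc)]
  · exact (hQ.2.1 z _ hz hc).2.1.unique rfl h.symm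

def mulLeft (hQ : IsWeakLeftQuasifield mul one) (a : K) : K →+ K :=
  AddMonoidHom.mk' (mul a) (hQ.2.2.2 a)

theorem sub_mulLeft_injective (hQ : IsWeakLeftQuasifield mul one) {a a' : K} (hne : a ≠ a') :
    Function.Injective (hQ.mulLeft a - hQ.mulLeft a') := by
  refine (injective_iff_map_eq_zero _).2 fun z hz => ?_
  by_contra hz0
  exact hne (hQ.mul_right_cancel hz0 (sub_eq_zero.1 hz))

end IsWeakLeftQuasifield

/-- A finite weak left quasi-field satisfies VW5, hence is a left quasi-field. -/
theorem finite_weakLeftQuasifield_VW5 {K : Type*} [AddCommGroup K] [Finite K]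
    (mul : K → K → K) (one : K) (hQ : IsWeakLeftQuasifield mul one) :
    ∀ a a' b : K, a ≠ a' → ∃! x, mul a x = mul a' x + b := by
  intro a a' b hne
  have hbij := Finite.injective_iff_bijective.1 (hQ.sub_mulLeft_injective hne)
  simpa only [AddMonoidHom.sub_apply, IsWeakLeftQuasifield.mulLeft, AddMonoidHom.mk'_apply,
    sub_eq_iff_eq_add'] using hbij.existsUnique b
end

section
/- Let K' be a left near-field. For any two points z, z' of the affine plane (K')² neither of which lies on the horizontal axis K'×{0} or the vertical axis {0}×K', there is an automorphism of the affine plane (K')² fixing the origin, the horizontal axis, and the vertical axis (setwise), and taking z to z'. -/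
/-- A left quasi-field: abelian additive group and axioms VW2–VW5. -/
def IsLeftQuasifield {K : Type*} [AddCommGroup K] (mul : K → K → K) (one : K) : Prop :=
  one ≠ 0 ∧
  (∀ a b : K, a ≠ 0 → b ≠ 0 →
    (∃! x, mul a x = b) ∧ (∃! x, mul x a = b) ∧
    (∀ x, mul a x = b → x ≠ 0) ∧ (∀ x, mul x a = b → x ≠ 0) ∧ mul a b ≠ 0) ∧
  (∀ x : K, mul one x = x ∧ mul x one = x ∧ mul 0 x = 0 ∧ mul x 0 = 0) ∧
  (∀ a x y : K, mul a (x + y) = mul a x + mul a y) ∧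
  (∀ a a' b : K, a ≠ a' → ∃! x, mul a x = mul a' x + b)

/-- A left near-field is a left quasi-field with associative multiplication. -/
def IsLeftNearField {K : Type*} [AddCommGroup K] (mul : K → K → K) (one : K) : Prop :=
  IsLeftQuasifield mul one ∧ ∀ x y z : K, mul (mul x y) z = mul x (mul y z)

/-- The lines of the affine plane K²: vertical lines x = c and lines y = ax + b. -/
def qLines {K : Type*} [AddCommGroup K] (mul : K → K → K) : Set (Set (K × K)) :=
  {S | (∃ c, S = {p : K × K | p.1 = c}) ∨ (∃ a b, S = {p : K × K | p.2 = mul a p.1 + b})}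

/-!
The required automorphism is a diagonal scaling `(x, y) ↦ (c x, d y)`, where `c` and `d` solve
`c z₁ = z'₁` and `d z₂ = z'₂`. Left multiplications are bijective and preserve the axes, and if
`e c = 1` then the line `y = a x + b` is carried to `y = (d a e) x + d b`: this is where
associativity and left distributivity enter.
-/

open Function

section ProdCongr

variable {α α' β β' : Type*}

theorem Equiv.prodCongr_image_setOf_fst_eq (σ : α ≃ α') (τ : β ≃ β') (c : α) :
    σ.prodCongr τ '' {p | p.1 = c} = {q | q.1 = σ c} := by
  rw [Equiv.image_eq_preimage_symm]
  ext q
  simp [Equiv.eq_symm_apply, eq_comm]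

theorem Equiv.prodCongr_image_setOf_snd_eq (σ : α ≃ α') (τ : β ≃ β') (c : β) :
    σ.prodCongr τ '' {p | p.2 = c} = {q | q.2 = τ c} := by
  rw [Equiv.image_eq_preimage_symm]
  ext q
  simp [Equiv.eq_symm_apply, eq_comm]

theorem Equiv.prodCongr_image_setOf_snd_eq_apply_fst (σ : α ≃ α') (τ : β ≃ β') (g : α → β) :
    σ.prodCongr τ '' {p | p.2 = g p.1} = {q | q.2 = τ (g (σ.symm q.1))} := by
  rw [Equiv.image_eq_preimage_symm]
  ext q
  simp [Equiv.symm_apply_eq]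

end ProdCongr

theorem Equiv.prodCongr_image_mem_qLines {K : Type*} [AddCommGroup K] {mul : K → K → K}
    (σ τ : K ≃ K) (hστ : ∀ a b, ∃ a' b', ∀ y, τ (mul a y + b) = mul a' (σ y) + b')
    {l : Set (K × K)} (hl : l ∈ qLines mul) : σ.prodCongr τ '' l ∈ qLines mul := by
  rcases hl with ⟨c, rfl⟩ | ⟨a, b, rfl⟩
  · exact Or.inl ⟨σ c, σ.prodCongr_image_setOf_fst_eq τ c⟩
  · obtain ⟨a', b', h⟩ := hστ a b
    refine Or.inr ⟨a', b', ?_⟩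
    rw [σ.prodCongr_image_setOf_snd_eq_apply_fst τ (fun x => mul a x + b)]
    simp only [h, Equiv.apply_symm_apply]

namespace IsLeftQuasifield

variable {K : Type*} [AddCommGroup K] {mul : K → K → K} {one : K}

theorem mul_zero (hQ : IsLeftQuasifield mul one) (x : K) : mul x 0 = 0 :=
  (hQ.2.2.1 x).2.2.2

theorem exists_ne_zero_mul_eq (hQ : IsLeftQuasifield mul one) {a b : K} (ha : a ≠ 0)
    (hb : b ≠ 0) : ∃ c, c ≠ 0 ∧ mul c a = b := by
  obtain ⟨c, hc, -⟩ := (hQ.2.1 a b ha hb).2.1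
  exact ⟨c, (hQ.2.1 a b ha hb).2.2.2.1 c hc, hc⟩

theorem mul_left_bijective (hQ : IsLeftQuasifield mul one) {c : K} (hc : c ≠ 0) :
    Bijective (mul c) := by
  have eq_zero : ∀ {x}, mul c x = 0 → x = 0 := fun h =>
    by_contra fun hx => (hQ.2.1 c _ hc hx).2.2.2.2 h
  refine ⟨fun x y hxy => ?_, fun b => ?_⟩
  · by_cases hb : mul c x = 0
    · exact (eq_zero hb).trans (eq_zero (hxy ▸ hb)).symm
    · exact (hQ.2.1 c _ hc hb).1.unique rfl hxy.symm
  · by_cases hb : b = 0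
    · exact ⟨0, hb ▸ hQ.mul_zero c⟩
    · exact (hQ.2.1 c b hc hb).1.exists

noncomputable def leftMulEquiv (hQ : IsLeftQuasifield mul one) {c : K} (hc : c ≠ 0) : K ≃ K :=
  Equiv.ofBijective (mul c) (hQ.mul_left_bijective hc)

end IsLeftQuasifield

theorem IsLeftNearField.exists_mul_affine_eq {K : Type*} [AddCommGroup K] {mul : K → K → K}
    {one : K} (hN : IsLeftNearField mul one) {c : K} (hc : c ≠ 0) (d a b : K) :
    ∃ a' b', ∀ y, mul d (mul a y + b) = mul a' (mul c y) + b' := by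
  obtain ⟨⟨hone, hmag, hid, hdist, -⟩, hassoc⟩ := hN
  obtain ⟨e, he, -⟩ := (hmag c one hc hone).2.1
  refine ⟨mul (mul d a) e, mul d b, fun y => ?_⟩
  rw [hdist, hassoc (mul d a), ← hassoc e, he, (hid y).1, hassoc]

/-- For a left near-field K', and points z, z' off both axes, there is an
automorphism of the plane (K')² fixing the origin and both axes (setwise)
and taking z to z'. -/
theorem nearField_axis_preserving_automorphism {K' : Type*} [AddCommGroup K']
    (mul : K' → K' → K') (one : K') (hN : IsLeftNearField mul one)
    (z z' : K' × K')
    (hz : z ∉ ({p : K' × K' | p.2 = 0} : Set (K' × K')) ∧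
          z ∉ ({p : K' × K' | p.1 = 0} : Set (K' × K')))
    (hz' : z' ∉ ({p : K' × K' | p.2 = 0} : Set (K' × K')) ∧
           z' ∉ ({p : K' × K' | p.1 = 0} : Set (K' × K'))) :
    ∃ f : K' × K' → K' × K', Function.Bijective f ∧
      (∀ l ∈ qLines mul, f '' l ∈ qLines mul) ∧
      f (0, 0) = (0, 0) ∧
      f '' {p : K' × K' | p.2 = 0} = {p : K' × K' | p.2 = 0} ∧
      f '' {p : K' × K' | p.1 = 0} = {p : K' × K' | p.1 = 0} ∧
      f z = z' := by
  have hQ := hN.1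
  obtain ⟨c, hc, hcz⟩ := hQ.exists_ne_zero_mul_eq hz.2 hz'.2
  obtain ⟨d, hd, hdz⟩ := hQ.exists_ne_zero_mul_eq hz.1 hz'.1
  set σ := hQ.leftMulEquiv hc
  set τ := hQ.leftMulEquiv hd
  have hσ0 : σ 0 = 0 := hQ.mul_zero c
  have hτ0 : τ 0 = 0 := hQ.mul_zero d
  refine ⟨σ.prodCongr τ, Equiv.bijective _,
    fun _ => σ.prodCongr_image_mem_qLines τ (hN.exists_mul_affine_eq hc d), ?_, ?_, ?_, ?_⟩
  · simp [hσ0, hτ0]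
  · rw [σ.prodCongr_image_setOf_snd_eq τ, hτ0]
  · rw [σ.prodCongr_image_setOf_fst_eq τ, hσ0]
  · exact Prod.ext hcz hdz
end

section
/- Let z, z' be two distinct points of an affine plane and l the line through them. There is at most one translation taking z to z', and if such a translation exists, it leaves invariant every line parallel to l. -/
/-- Two lines are parallel if they are equal or disjoint. -/
def Parallel {P : Type*} (l m : Set P) : Prop := l = m ∨ l ∩ m = ∅

/-- An affine plane structure on a set of lines L. -/
def IsAffinePlane {P : Type*} (L : Set (Set P)) : Prop :=
  (∀ p q : P, p ≠ q → ∃! l, l ∈ L ∧ p ∈ l ∧ q ∈ l) ∧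
  (∀ l ∈ L, ∀ p ∉ l, ∃! m, m ∈ L ∧ p ∈ m ∧ l ∩ m = ∅) ∧
  (∃ p q r : P, ∀ l ∈ L, ¬(p ∈ l ∧ q ∈ l ∧ r ∈ l))

/-- A translation: an automorphism taking each line to a parallel line and
preserving every line of some parallel class. -/
def IsTranslation {P : Type*} (L : Set (Set P)) (f : P → P) : Prop :=
  Function.Bijective f ∧
  (∀ l ∈ L, f '' l ∈ L) ∧
  (∀ l ∈ L, Parallel (f '' l) l) ∧
  (∃ l₀ ∈ L, ∀ l ∈ L, Parallel l l₀ → f '' l = l)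

/-!
A translation `f` moving `z` to `z' ≠ z` must fix every line parallel to `l = zz'`: the line
through `z` in the direction `f` fixes contains `z'`, hence is `l`. So for `p ∉ l` the point
`f p` lies on the parallel to `l` through `p` and on `f(zp)`, the parallel to `zp` through `z'`;
these two lines meet in one point that does not depend on `f`. For `p ∈ l` repeat the argument
with a base point `q ∉ l` and its image.
-/

section

variable {P : Type*} {L : Set (Set P)} {f g : P → P} {k l m n : Set P} {p q z z' : P}

namespace Parallel

theorem symm (h : Parallel l m) : Parallel m l :=
  h.imp Eq.symm fun h => by rwa [Set.inter_comm]

theorem eq_of_mem (h : Parallel m l) (hpm : p ∈ m) (hpl : p ∈ l) : m = l :=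
  h.resolve_right (Set.nonempty_iff_ne_empty.1 ⟨p, hpm, hpl⟩)

end Parallel

namespace IsAffinePlane

theorem exists_line (hA : IsAffinePlane L) (hpq : p ≠ q) : ∃ l ∈ L, p ∈ l ∧ q ∈ l := by
  obtain ⟨l, ⟨hl, hpl, hql⟩, -⟩ := hA.1 p q hpq
  exact ⟨l, hl, hpl, hql⟩

theorem line_eq (hA : IsAffinePlane L) (hpq : p ≠ q) (hl : l ∈ L) (hm : m ∈ L)
    (hpl : p ∈ l) (hql : q ∈ l) (hpm : p ∈ m) (hqm : q ∈ m) : l = m :=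
  (hA.1 p q hpq).unique ⟨hl, hpl, hql⟩ ⟨hm, hpm, hqm⟩

theorem exists_notMem (hA : IsAffinePlane L) (hl : l ∈ L) : ∃ q, q ∉ l := by
  obtain ⟨a, b, c, h⟩ := hA.2.2
  by_contra! hall
  exact h l hl ⟨hall a, hall b, hall c⟩

theorem exists_parallel (hA : IsAffinePlane L) (hl : l ∈ L) (p : P) :
    ∃ m ∈ L, p ∈ m ∧ Parallel m l := by
  by_cases hp : p ∈ l
  · exact ⟨l, hl, hp, Or.inl rfl⟩
  · obtain ⟨m, ⟨hm, hpm, hlm⟩, -⟩ := hA.2.1 l hl p hp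
    exact ⟨m, hm, hpm, Or.inr (by rwa [Set.inter_comm])⟩

theorem parallel_eq (hA : IsAffinePlane L) (hl : l ∈ L) (hm : m ∈ L) (hn : n ∈ L)
    (hpm : p ∈ m) (hpn : p ∈ n) (hml : Parallel m l) (hnl : Parallel n l) : m = n := by
  by_cases hp : p ∈ l
  · exact (hml.eq_of_mem hpm hp).trans (hnl.eq_of_mem hpn hp).symm
  · have disjoint {k : Set P} (hpk : p ∈ k) (hkl : Parallel k l) : l ∩ k = ∅ := by
      rw [Set.inter_comm]
      exact hkl.resolve_left fun h => hp (h ▸ hpk)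
    exact (hA.2.1 l hl p hp).unique ⟨hm, hpm, disjoint hpm hml⟩ ⟨hn, hpn, disjoint hpn hnl⟩

theorem parallel_trans (hA : IsAffinePlane L) (hm : m ∈ L) (hl : l ∈ L) (hn : n ∈ L)
    (hml : Parallel m l) (hln : Parallel l n) : Parallel m n := by
  by_cases hmn : m ∩ n = ∅
  · exact Or.inr hmn
  · obtain ⟨p, hpm, hpn⟩ := Set.nonempty_iff_ne_empty.2 hmn
    exact Or.inl (hA.parallel_eq hl hm hn hpm hpn hml hln.symm)

end IsAffinePlane

namespace IsTranslation

theorem image_eq_of_parallel (hA : IsAffinePlane L) (hf : IsTranslation L f)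
    (hn : n ∈ L) (hm : m ∈ L) (hpn : p ∈ n) (hfpm : f p ∈ m) (hmn : Parallel m n) :
    f '' n = m :=
  hA.parallel_eq hn (hf.2.1 n hn) hm (Set.mem_image_of_mem f hpn) hfpm (hf.2.2.1 n hn) hmn

theorem image_eq_self_of_parallel (hA : IsAffinePlane L) (hf : IsTranslation L f)
    (hfz : f z = z') (hzz : z ≠ z') (hk : k ∈ L) (hzk : z ∈ k) (hz'k : z' ∈ k)
    (hm : m ∈ L) (hmk : Parallel m k) : f '' m = m := by
  obtain ⟨-, -, -, l₀, hl₀, hfix⟩ := hf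
  obtain ⟨k₀, hk₀, hzk₀, hk₀l₀⟩ := hA.exists_parallel hl₀ z
  have hz'k₀ : z' ∈ k₀ := hfix k₀ hk₀ hk₀l₀ ▸ hfz ▸ Set.mem_image_of_mem f hzk₀
  have hkk₀ : k = k₀ := hA.line_eq hzz hk hk₀ hzk hz'k hzk₀ hz'k₀
  exact hfix m hm (hA.parallel_trans hm hk hl₀ hmk (hkk₀ ▸ hk₀l₀))

theorem apply_mem_of_parallel (hA : IsAffinePlane L) (hf : IsTranslation L f)
    (hfz : f z = z') (hzz : z ≠ z') (hk : k ∈ L) (hzk : z ∈ k) (hz'k : z' ∈ k)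
    (hm : m ∈ L) (hmk : Parallel m k) (hpm : p ∈ m) : f p ∈ m :=
  hf.image_eq_self_of_parallel hA hfz hzz hk hzk hz'k hm hmk ▸ Set.mem_image_of_mem f hpm

theorem ne_apply_of_notMem (hA : IsAffinePlane L) (hf : IsTranslation L f)
    (hfz : f z = z') (hzz : z ≠ z') (hk : k ∈ L) (hzk : z ∈ k) (hz'k : z' ∈ k)
    (hq : q ∉ k) : q ≠ f q := by
  intro hfq
  have hzq : z ≠ q := fun h => hq (h ▸ hzk)
  obtain ⟨n, hn, hzn, hqn⟩ := hA.exists_line hzq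
  have hfn : f '' n = n := hf.image_eq_of_parallel hA hn hn hqn (hfq ▸ hqn) (Or.inl rfl)
  have hz'n : z' ∈ n := hfn ▸ hfz ▸ Set.mem_image_of_mem f hzn
  exact hq (hA.line_eq hzz hn hk hzn hz'n hzk hz'k ▸ hqn)

theorem apply_eq_of_notMem (hA : IsAffinePlane L) (hf : IsTranslation L f)
    (hg : IsTranslation L g) (hfz : f z = z') (hgz : g z = z') (hzz : z ≠ z')
    (hk : k ∈ L) (hzk : z ∈ k) (hz'k : z' ∈ k) (hp : p ∉ k) : f p = g p := by
  obtain ⟨m, hm, hpm, hmk⟩ := hA.exists_parallel hk p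
  obtain ⟨n, hn, hzn, hpn⟩ := hA.exists_line fun h : z = p => hp (h ▸ hzk)
  obtain ⟨n', hn', hz'n', hn'n⟩ := hA.exists_parallel hn z'
  have hmem {h : P → P} (hh : IsTranslation L h) (hhz : h z = z') : h p ∈ m ∧ h p ∈ n' :=
    ⟨hh.apply_mem_of_parallel hA hhz hzz hk hzk hz'k hm hmk hpm,
      hh.image_eq_of_parallel hA hn hn' hzn (hhz ▸ hz'n') hn'n ▸ Set.mem_image_of_mem h hpn⟩
  have hpn' : p ∉ n' := by
    intro hpn'
    have hz'n : z' ∈ n := hn'n.eq_of_mem hpn' hpn ▸ hz'n'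
    exact hp (hA.line_eq hzz hn hk hzn hz'n hzk hz'k ▸ hpn)
  by_contra hfg
  obtain ⟨hfpm, hfpn'⟩ := hmem hf hfz
  obtain ⟨hgpm, hgpn'⟩ := hmem hg hgz
  exact hpn' (hA.line_eq hfg hm hn' hfpm hgpm hfpn' hgpn' ▸ hpm)

theorem eq_of_apply_eq (hA : IsAffinePlane L) (hf : IsTranslation L f)
    (hg : IsTranslation L g) (hfz : f z = z') (hgz : g z = z') (hzz : z ≠ z') : f = g := by
  obtain ⟨k, hk, hzk, hz'k⟩ := hA.exists_line hzz
  funext p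
  by_cases hp : p ∈ k
  · obtain ⟨q, hq⟩ := hA.exists_notMem hk
    have hfgq : f q = g q := hf.apply_eq_of_notMem hA hg hfz hgz hzz hk hzk hz'k hq
    have hqq : q ≠ f q := hf.ne_apply_of_notMem hA hfz hzz hk hzk hz'k hq
    obtain ⟨m, hm, hqm, hmk⟩ := hA.exists_parallel hk q
    have hfqm : f q ∈ m := hf.apply_mem_of_parallel hA hfz hzz hk hzk hz'k hm hmk hqm
    have hpm : p ∉ m := fun hpm => hq (hmk.eq_of_mem hpm hp ▸ hqm)
    exact hf.apply_eq_of_notMem hA hg rfl hfgq.symm hqq hm hqm hfqm hpm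
  · exact hf.apply_eq_of_notMem hA hg hfz hgz hzz hk hzk hz'k hp

end IsTranslation

end

/-- There is at most one translation taking z to z', and any such translation
leaves invariant every line parallel to the line l through z and z'. -/
theorem translation_unique_and_traces {P : Type*} (L : Set (Set P))
    (hA : IsAffinePlane L) (z z' : P) (hzz : z ≠ z')
    (l : Set P) (hl : l ∈ L) (hzl : z ∈ l) (hz'l : z' ∈ l) :
    (∀ f g : P → P, IsTranslation L f → IsTranslation L g →
      f z = z' → g z = z' → f = g) ∧
    (∀ f : P → P, IsTranslation L f → f z = z' →
      ∀ m ∈ L, Parallel m l → f '' m = m) :=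
  ⟨fun _ _ hf hg hfz hgz => hf.eq_of_apply_eq hA hg hfz hgz hzz,
    fun _ hf hfz _ hm hml => hf.image_eq_self_of_parallel hA hfz hzz hl hzl hz'l hm hml⟩
end

section
/- Let K be a field with a finite group G of automorphisms, F the fixed field, N(x) = ∏_{g∈G} g(x) the norm, and φ : N(K*) → G any map with φ(1) = 1. Define α : K → G by α(x) = φ(N(x)) for x ≠ 0 and α(0) = 1, and the multiplication x ⊙ y = x·α(x)(y). Then K with this multiplication, the original addition, 0, and 1 is a left quasi-field. -/
/-! Every `g ∈ G` preserves the norm `N`, so `N (x * g y) = N x * N y`; since `α x ∈ G`, the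
norm is multiplicative for `⊙`. Hence `x ⊙ a = y ⊙ a` forces `N x = N y`, so `α x = α y`, and
then `x = y`. The same computation shows that a solution of `x ⊙ a = b` must satisfy
`α x = φ (N b / N a) =: g`, so `x = b / g a`, and this candidate works. Finally every `g ∈ G`
is linear over the fixed field `F`, so `x ↦ a ⊙ x - a' ⊙ x` is an `F`-linear endomorphism of the
finite-dimensional space `K`; it is injective by right cancellation, hence bijective. -/

/-- A left quasi-field: abelian additive group and axioms VW2–VW5. -/
def IsLeftQuasifieldMul {K : Type*} [AddCommGroup K] (mul : K → K → K) (one : K) : Prop :=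
  one ≠ 0 ∧
  (∀ a b : K, a ≠ 0 → b ≠ 0 →
    (∃! x, mul a x = b) ∧ (∃! x, mul x a = b) ∧
    (∀ x, mul a x = b → x ≠ 0) ∧ (∀ x, mul x a = b → x ≠ 0) ∧ mul a b ≠ 0) ∧
  (∀ x : K, mul one x = x ∧ mul x one = x ∧ mul 0 x = 0 ∧ mul x 0 = 0) ∧
  (∀ a x y : K, mul a (x + y) = mul a x + mul a y) ∧
  (∀ a a' b : K, a ≠ a' → ∃! x, mul a x = mul a' x + b)

section AutNorm

variable {K : Type*} [Field K] (G : Subgroup (K ≃+* K)) [Fintype G]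

def autNorm : K →*₀ K where
  toFun x := ∏ g : G, (g : K ≃+* K) x
  map_zero' := Finset.prod_eq_zero (Finset.mem_univ 1) (map_zero _)
  map_one' := by simp
  map_mul' x y := by simp [Finset.prod_mul_distrib]

theorem autNorm_map_of_mem {g : K ≃+* K} (hg : g ∈ G) (x : K) : autNorm G (g x) = autNorm G x :=
  Fintype.prod_equiv (Equiv.mulRight ⟨g, hg⟩) _ _ fun _ => rfl

end AutNorm

section TwistedMul

variable {K : Type*} [Field K]

def twistedMul (σ : K → K ≃+* K) (x y : K) : K := x * σ x y

variable (σ : K → K ≃+* K)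

@[simp]
theorem twistedMul_eq_zero_iff {x y : K} : twistedMul σ x y = 0 ↔ x = 0 ∨ y = 0 := by
  simp [twistedMul]

theorem twistedMul_add (a x y : K) :
    twistedMul σ a (x + y) = twistedMul σ a x + twistedMul σ a y := by
  simp [twistedMul, mul_add]

theorem twistedMul_one_right (x : K) : twistedMul σ x 1 = x := by
  simp [twistedMul]

theorem twistedMul_one_left (h : σ 1 = RingEquiv.refl K) (x : K) : twistedMul σ 1 x = x := by
  simp [twistedMul, h]

theorem existsUnique_twistedMul_eq_of_left_ne_zero {a : K} (ha : a ≠ 0) (b : K) :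
    ∃! x, twistedMul σ a x = b :=
  ((Equiv.mulLeft₀ a ha).bijective.comp (σ a).bijective).existsUnique b

end TwistedMul

section Andre

variable {K : Type*} [Field K] {G : Subgroup (K ≃+* K)} [Fintype G] {σ φ : K → K ≃+* K}

theorem autNorm_twistedMul (hσG : ∀ x, x ≠ 0 → σ x ∈ G) (x y : K) :
    autNorm G (twistedMul σ x y) = autNorm G x * autNorm G y := by
  rcases eq_or_ne x 0 with rfl | hx
  · simp [twistedMul]
  · rw [twistedMul, map_mul, autNorm_map_of_mem G (hσG x hx)]

variable (hφG : ∀ u, φ u ∈ G) (hσ : ∀ x, x ≠ 0 → σ x = φ (autNorm G x))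
include hφG hσ

theorem twist_mem_of_ne_zero {x : K} (hx : x ≠ 0) : σ x ∈ G :=
  hσ x hx ▸ hφG _

theorem twistedMul_right_cancel₀ {a x y : K} (ha : a ≠ 0)
    (h : twistedMul σ x a = twistedMul σ y a) : x = y := by
  have hσG := fun z => twist_mem_of_ne_zero hφG hσ (x := z)
  have hN : autNorm G x = autNorm G y := by
    have := congrArg (autNorm G) h
    rwa [autNorm_twistedMul hσG, autNorm_twistedMul hσG, mul_left_inj' ((map_ne_zero _).2 ha)]
      at this
  rcases eq_or_ne x 0 with rfl | hx
  · exact ((map_eq_zero _).1 (hN.symm.trans (map_zero _))).symm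
  have hy : y ≠ 0 := fun hy => hx ((map_eq_zero _).1 (hN.trans (by rw [hy, map_zero])))
  have hσxy : σ x = σ y := by rw [hσ x hx, hσ y hy, hN]
  rw [twistedMul, twistedMul, hσxy] at h
  exact mul_right_cancel₀ ((map_ne_zero _).2 ha) h

theorem exists_twistedMul_eq {a b : K} (ha : a ≠ 0) (hb : b ≠ 0) : ∃ x, twistedMul σ x a = b := by
  set g := φ (autNorm G b / autNorm G a)
  have hga : g a ≠ 0 := (map_ne_zero g).2 ha
  have hx : b / g a ≠ 0 := div_ne_zero hb hga
  have hσx : σ (b / g a) = g := by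
    rw [hσ _ hx, map_div₀, autNorm_map_of_mem G (hφG _)]
  exact ⟨b / g a, by rw [twistedMul, hσx, div_mul_cancel₀ _ hga]⟩

theorem existsUnique_twistedMul_eq_of_right_ne_zero {a b : K} (ha : a ≠ 0) (hb : b ≠ 0) :
    ∃! x, twistedMul σ x a = b :=
  let ⟨x, hx⟩ := exists_twistedMul_eq hφG hσ ha hb
  ⟨x, hx, fun _ hy => twistedMul_right_cancel₀ hφG hσ ha (hy.trans hx.symm)⟩

def twistedMulLeft (a : K) : K →ₗ[FixedPoints.subfield G K] K where
  toFun := twistedMul σ a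
  map_add' := twistedMul_add σ a
  map_smul' c x := by
    rcases eq_or_ne a 0 with rfl | ha
    · simp [twistedMul]
    · have hc : σ a c = c := c.2 ⟨σ a, twist_mem_of_ne_zero hφG hσ ha⟩
      simp only [twistedMul, Subfield.smul_def, smul_eq_mul, RingHom.id_apply, map_mul, hc]
      ring

theorem existsUnique_twistedMul_eq_twistedMul_add {a a' : K} (hne : a ≠ a') (b : K) :
    ∃! x, twistedMul σ a x = twistedMul σ a' x + b := by
  set L := twistedMulLeft hφG hσ a - twistedMulLeft hφG hσ a'
  have hL : ∀ x, L x = b ↔ twistedMul σ a x = twistedMul σ a' x + b := fun x =>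
    sub_eq_iff_eq_add'
  have hinj : Function.Injective L := by
    refine (injective_iff_map_eq_zero L).2 fun x hx => ?_
    by_contra hx0
    exact hne (twistedMul_right_cancel₀ hφG hσ hx0 (sub_eq_zero.1 hx))
  simpa only [hL] using
    (Function.Bijective.existsUnique ⟨hinj, LinearMap.injective_iff_surjective.1 hinj⟩ b)

end Andre

theorem andre_leftQuasifield_general {K : Type*} [Field K]
    (G : Subgroup (K ≃+* K)) [Fintype G]
    (N : K → K) (hN : ∀ x, N x = ∏ g : G, (g : K ≃+* K) x)
    (φ : K → (K ≃+* K)) (hφG : ∀ u, φ u ∈ G) (hφ1 : φ 1 = RingEquiv.refl K)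
    (α : K → (K ≃+* K))
    (hα : ∀ x : K, x ≠ 0 → α x = φ (N x)) :
    IsLeftQuasifieldMul (fun x y : K => x * α x y) (1 : K) := by
  obtain rfl : N = autNorm G := funext hN
  have hα1 : α 1 = RingEquiv.refl K := by rw [hα 1 one_ne_zero, map_one, hφ1]
  show IsLeftQuasifieldMul (twistedMul α) 1
  refine ⟨one_ne_zero, fun a b ha hb => ⟨?_, ?_, ?_, ?_, ?_⟩, fun x => ⟨?_, ?_, ?_, ?_⟩,
    twistedMul_add α, fun a a' b hne => existsUnique_twistedMul_eq_twistedMul_add hφG hα hne b⟩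
  · exact existsUnique_twistedMul_eq_of_left_ne_zero α ha b
  · exact existsUnique_twistedMul_eq_of_right_ne_zero hφG hα ha hb
  · rintro x hx rfl
    exact hb (hx.symm.trans ((twistedMul_eq_zero_iff α).2 (Or.inr rfl)))
  · rintro x hx rfl
    exact hb (hx.symm.trans ((twistedMul_eq_zero_iff α).2 (Or.inl rfl)))
  · exact (twistedMul_eq_zero_iff α).not.2 (not_or.2 ⟨ha, hb⟩)
  · exact twistedMul_one_left α hα1 x
  · exact twistedMul_one_right α x
  · exact (twistedMul_eq_zero_iff α).2 (Or.inl rfl)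
  · exact (twistedMul_eq_zero_iff α).2 (Or.inr rfl)

/-- The André construction: a field K with a finite group G of automorphisms,
norm N(x) = ∏_{g ∈ G} g(x), a map φ on the norms with φ(1) = 1, α(x) = φ(N(x))
for x ≠ 0 and α(0) = id, and x ⊙ y = x·α(x)(y), yields a left quasi-field. -/
theorem andre_leftQuasifield {K : Type*} [Field K]
    (G : Subgroup (K ≃+* K)) [Fintype G]
    (N : K → K) (hN : ∀ x, N x = ∏ g : G, (g : K ≃+* K) x)
    (φ : K → (K ≃+* K)) (hφG : ∀ u, φ u ∈ G) (hφ1 : φ 1 = RingEquiv.refl K)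
    (α : K → (K ≃+* K)) (hα0 : α 0 = RingEquiv.refl K)
    (hα : ∀ x : K, x ≠ 0 → α x = φ (N x)) :
    IsLeftQuasifieldMul (fun x y : K => x * α x y) (1 : K) :=
  andre_leftQuasifield_general G N hN φ hφG hφ1 α hα
end

section
/- With K, G, N, φ, α and x ⊙ y = x·α(x)(y) as in the André quasi-field construction, the multiplication ⊙ is associative if and only if φ is a multiplicative homomorphism on N(K*), i.e., φ(uv) = φ(u)φ(v) for all u, v ∈ N(K*). -/
/-!
The product x ⊙ y is associative exactly when α(x ⊙ y) = α(x) α(y) for nonzero x, y: expand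
both sides of (x ⊙ y) ⊙ z = x ⊙ (y ⊙ z) and cancel the nonzero factor x ⊙ y. Since the norm is
multiplicative and invariant under G, N(x ⊙ y) = N(x) N(y), so this condition reads
φ(N x · N y) = φ(N x) φ(N y), i.e. multiplicativity of φ on N(K*).
-/

section Norm

variable {K : Type*} [CommRing K] (G : Subgroup (K ≃+* K)) [Fintype G]

theorem prod_subgroup_apply_mul_apply_of_mem {σ : K ≃+* K} (hσ : σ ∈ G) (a b : K) :
    ∏ g : G, (g : K ≃+* K) (a * σ b) = (∏ g : G, (g : K ≃+* K) a) * ∏ g : G, (g : K ≃+* K) b := by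
  have hinv : ∏ g : G, (g : K ≃+* K) (σ b) = ∏ g : G, (g : K ≃+* K) b :=
    Fintype.prod_equiv (Equiv.mulRight ⟨σ, hσ⟩) _ _ fun _ => rfl
  rw [← hinv, ← Finset.prod_mul_distrib]
  simp only [map_mul]

end Norm

section TwistedMul

variable {K : Type*} [Ring K] [NoZeroDivisors K] (α : K → K ≃+* K)

theorem twisted_mul_assoc_iff :
    (∀ x y z : K, (x * α x y) * α (x * α x y) z = x * α x (y * α y z)) ↔
      ∀ x y : K, x ≠ 0 → y ≠ 0 → α (x * α x y) = α x * α y := by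
  constructor
  · intro hassoc x y hx hy
    have hxy : x * α x y ≠ 0 := mul_ne_zero hx ((map_ne_zero_iff _ (α x).injective).mpr hy)
    ext z
    have h := hassoc x y z
    rw [map_mul, ← mul_assoc] at h
    exact mul_left_cancel₀ hxy h
  · intro hmul x y z
    rcases eq_or_ne x 0 with rfl | hx
    · simp only [zero_mul]
    rcases eq_or_ne y 0 with rfl | hy
    · simp only [map_zero, mul_zero, zero_mul]
    rw [hmul x y hx hy, map_mul, mul_assoc]
    rfl

end TwistedMul

theorem andre_assoc_iff_hom_general {K : Type*} [Field K]
    (G : Subgroup (K ≃+* K)) [Fintype G]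
    (N : K → K) (hN : ∀ x, N x = ∏ g : G, (g : K ≃+* K) x)
    (φ : K → (K ≃+* K)) (hφG : ∀ u, φ u ∈ G)
    (α : K → (K ≃+* K))
    (hα : ∀ x : K, x ≠ 0 → α x = φ (N x)) :
    (∀ x y z : K, (x * α x y) * α (x * α x y) z = x * α x (y * α y z)) ↔
    (∀ u v : K, (∃ x : K, x ≠ 0 ∧ N x = u) → (∃ y : K, y ≠ 0 ∧ N y = v) →
      φ (u * v) = φ u * φ v) := by
  have key : ∀ x y : K, x ≠ 0 → y ≠ 0 →
      (α (x * α x y) = α x * α y ↔ φ (N x * N y) = φ (N x) * φ (N y)) := by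
    intro x y hx hy
    have hxy : x * α x y ≠ 0 := mul_ne_zero hx ((map_ne_zero_iff _ (α x).injective).mpr hy)
    have hNxy : N (x * α x y) = N x * N y := by
      rw [hN, hN, hN, hα x hx, prod_subgroup_apply_mul_apply_of_mem G (hφG _)]
    rw [hα _ hxy, hNxy, hα x hx, hα y hy]
  rw [twisted_mul_assoc_iff]
  constructor
  · rintro hmul u v ⟨x, hx, rfl⟩ ⟨y, hy, rfl⟩
    exact (key x y hx hy).mp (hmul x y hx hy)
  · intro hφmul x y hx hy
    exact (key x y hx hy).mpr (hφmul _ _ ⟨x, hx, rfl⟩ ⟨y, hy, rfl⟩)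

/-- In the André construction, the multiplication x ⊙ y = x·α(x)(y) is associative
if and only if φ is multiplicative on N(K*). -/
theorem andre_assoc_iff_hom {K : Type*} [Field K]
    (G : Subgroup (K ≃+* K)) [Fintype G]
    (N : K → K) (hN : ∀ x, N x = ∏ g : G, (g : K ≃+* K) x)
    (φ : K → (K ≃+* K)) (hφG : ∀ u, φ u ∈ G) (hφ1 : φ 1 = RingEquiv.refl K)
    (α : K → (K ≃+* K)) (hα0 : α 0 = RingEquiv.refl K)
    (hα : ∀ x : K, x ≠ 0 → α x = φ (N x)) :
    (∀ x y z : K, (x * α x y) * α (x * α x y) z = x * α x (y * α y z)) ↔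
    (∀ u v : K, (∃ x : K, x ≠ 0 ∧ N x = u) → (∃ y : K, y ≠ 0 ∧ N y = v) →
      φ (u * v) = φ u * φ v) :=
  andre_assoc_iff_hom_general G N hN φ hφG α hα
end

section
/- With K, G, N, φ, α and x ⊙ y = x·α(x)(y) as in the André quasi-field construction, the right distributivity law (x+y) ⊙ a = x ⊙ a + y ⊙ a holds for all x, y, a if and only if φ maps every element of N(K*) to the identity automorphism (in which case ⊙ coincides with the field multiplication). -/
/-!
Right distributivity says that `(u + v) • σ (u + v) = u • σ u + v • σ v` as functions, where each
`σ x` is a ring homomorphism. As in Dedekind's proof of the independence of characters, comparing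
this identity at `b * a` with `σ u b` times it at `a` shows that `σ (u + v) = σ v` once
`σ u b ≠ σ v b` and `v ≠ 0`; the identity at `b` then forces `u = 0`. So `α` is constant on `K*`,
with value `α 1 = φ (N 1) = φ 1 = id`.
-/

section RightDistrib

variable {F R K : Type*} [Semiring R] [CommRing K] [IsDomain K] [FunLike F R K]
  [RingHomClass F R K]

theorem apply_add_eq_of_rightDistrib (σ : K → F)
    (hσ : ∀ x y a, (x + y) * σ (x + y) a = x * σ x a + y * σ y a)
    {u v : K} {b : R} (hv : v ≠ 0) (hb : σ u b ≠ σ v b) : σ (u + v) = σ v := by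
  have key : ∀ a, (u + v) * (σ (u + v) b - σ u b) * σ (u + v) a =
      v * (σ v b - σ u b) * σ v a := fun a => by
    have hba := hσ u v (b * a)
    simp only [map_mul] at hba
    linear_combination hba - σ u b * hσ u v a
  have hc : (u + v) * (σ (u + v) b - σ u b) = v * (σ v b - σ u b) := by
    simpa only [map_one, mul_one] using key 1
  have hc0 : v * (σ v b - σ u b) ≠ 0 := mul_ne_zero hv (sub_ne_zero.mpr hb.symm)
  exact DFunLike.ext _ _ fun a => mul_left_cancel₀ hc0 (hc ▸ key a)

theorem eq_of_rightDistrib (σ : K → F)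
    (hσ : ∀ x y a, (x + y) * σ (x + y) a = x * σ x a + y * σ y a)
    {u v : K} (hu : u ≠ 0) (hv : v ≠ 0) : σ u = σ v := by
  refine DFunLike.ext _ _ fun b => ?_
  by_contra hb
  have hb' := hσ u v b
  rw [apply_add_eq_of_rightDistrib σ hσ hv hb] at hb'
  exact hb (mul_left_cancel₀ hu (by linear_combination -hb'))

end RightDistrib

theorem andre_rightDistrib_iff_trivial_general {K : Type*} [Field K]
    (G : Subgroup (K ≃+* K)) [Fintype G]
    (N : K → K) (hN : ∀ x, N x = ∏ g : G, (g : K ≃+* K) x)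
    (φ : K → (K ≃+* K)) (hφ1 : φ 1 = RingEquiv.refl K)
    (α : K → (K ≃+* K)) (hα0 : α 0 = RingEquiv.refl K)
    (hα : ∀ x : K, x ≠ 0 → α x = φ (N x)) :
    ((∀ x y a : K, (x + y) * α (x + y) a = x * α x a + y * α y a) ↔
      (∀ x : K, x ≠ 0 → φ (N x) = RingEquiv.refl K)) ∧
    ((∀ x : K, x ≠ 0 → φ (N x) = RingEquiv.refl K) →
      ∀ x y : K, x * α x y = x * y) := by
  have hα1 : α 1 = RingEquiv.refl K := by
    rw [hα 1 one_ne_zero, hN]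
    simpa using hφ1
  have hα_refl (h : ∀ x : K, x ≠ 0 → φ (N x) = RingEquiv.refl K) (z : K) :
      α z = RingEquiv.refl K := by
    rcases eq_or_ne z 0 with rfl | hz
    · exact hα0
    · rw [hα z hz, h z hz]
  refine ⟨⟨fun hσ x hx => ?_, fun h x y a => ?_⟩, fun h x y => ?_⟩
  · rw [← hα x hx, eq_of_rightDistrib α hσ hx one_ne_zero, hα1]
  · simp only [hα_refl h, RingEquiv.refl_apply]
    ring
  · rw [hα_refl h, RingEquiv.refl_apply]

/-- In the André construction, the right distributivity law (x+y) ⊙ a = x ⊙ a + y ⊙ a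
holds if and only if φ maps every element of N(K*) to the identity automorphism,
in which case ⊙ coincides with the field multiplication. -/
theorem andre_rightDistrib_iff_trivial {K : Type*} [Field K]
    (G : Subgroup (K ≃+* K)) [Fintype G]
    (N : K → K) (hN : ∀ x, N x = ∏ g : G, (g : K ≃+* K) x)
    (φ : K → (K ≃+* K)) (hφG : ∀ u, φ u ∈ G) (hφ1 : φ 1 = RingEquiv.refl K)
    (α : K → (K ≃+* K)) (hα0 : α 0 = RingEquiv.refl K)
    (hα : ∀ x : K, x ≠ 0 → α x = φ (N x)) :
    ((∀ x y a : K, (x + y) * α (x + y) a = x * α x a + y * α y a) ↔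
      (∀ x : K, x ≠ 0 → φ (N x) = RingEquiv.refl K)) ∧
    ((∀ x : K, x ≠ 0 → φ (N x) = RingEquiv.refl K) →
      ∀ x y : K, x * α x y = x * y) :=
  andre_rightDistrib_iff_trivial_general G N hN φ hφ1 α hα0 hα
end
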